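/- Let d ≥ 2 and k be integers with 1 ≤ k ≤ d+1, and let β be a real number satisfying the condition of the previous proposition (β = (k ± √(k(d+1)(d+2−k)))/(k(d+1−k)) if 2 ≤ k ≤ d; β = 1 + 2/d if k = 1; β = −(d+2)/(2(d+1)) if k = d+1). Let X be a nonempty subset of T_d(k,β). Then R_d ∪ X is a 2-distance set if and only if 𝔩(x,y) ∈ {1/β², (β+1)/β²} for all x, y ∈ X with x ≠ y. -/

import Mathlib

noncomputable section

open scoped BigOperators Classical

/-- The set of Euclidean distances between distinct points of `X`. -/
def distSet {m : ℕ} (X : Set (EuclideanSpace ℝ (Fin m))) : Set ℝ :=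
  {r | ∃ x ∈ X, ∃ y ∈ X, x ≠ y ∧ dist x y = r}

/-- `X` is a 2-distance set: exactly two distances occur between distinct points. -/
def IsTwoDistSet {m : ℕ} (X : Set (EuclideanSpace ℝ (Fin m))) : Prop :=
  (distSet X).ncard = 2

/-- The affine hyperplane `H_d = {x ∈ ℝ^{d+1} : ∑ x_i = 1}`. -/
def Hplane (d : ℕ) : Set (EuclideanSpace ℝ (Fin (d+1))) :=
  {x | ∑ i, x i = 1}

/-- The regular simplex `R_d`: the standard basis vectors of `ℝ^{d+1}`. -/
def simplex (d : ℕ) : Set (EuclideanSpace ℝ (Fin (d+1))) :=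
  Set.range (fun i => EuclideanSpace.single i (1:ℝ))

/-- The constant `c = (1 - (d+1-k)β)/(d+1)`. -/
def cval (d k : ℕ) (β : ℝ) : ℝ := (1 - ((d:ℝ) + 1 - (k:ℝ)) * β) / ((d:ℝ) + 1)

/-- The set `T_d(k,β)` of points of `H_d` all of whose coordinates lie in `{c, c+β}`,
with exactly `k` coordinates equal to `c`. -/
def Tset (d k : ℕ) (β : ℝ) : Set (EuclideanSpace ℝ (Fin (d+1))) :=
  {x | x ∈ Hplane d ∧ (∀ i, x i = cval d k β ∨ x i = cval d k β + β) ∧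
    {i | x i = cval d k β}.ncard = k}

/-- `𝔩(x,y) = |{i : x_i ≠ y_i}|/2`. -/
def lfun {m : ℕ} (x y : EuclideanSpace ℝ (Fin m)) : ℝ :=
  ({i | x i ≠ y i}.ncard : ℝ) / 2

/-- The condition of Proposition 1 on `β` (given `d` and `k`). -/
def betaCond (d k : ℕ) (β : ℝ) : Prop :=
  (k = 1 ∧ β = 1 + 2/(d:ℝ)) ∨
  (k = d + 1 ∧ β = -((d:ℝ)+2)/(2*((d:ℝ)+1))) ∨
  (2 ≤ k ∧ k ≤ d ∧
    (β = ((k:ℝ) + Real.sqrt ((k:ℝ)*((d:ℝ)+1)*((d:ℝ)+2-(k:ℝ))))/((k:ℝ)*((d:ℝ)+1-(k:ℝ))) ∨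
     β = ((k:ℝ) - Real.sqrt ((k:ℝ)*((d:ℝ)+1)*((d:ℝ)+2-(k:ℝ))))/((k:ℝ)*((d:ℝ)+1-(k:ℝ)))))

/-!
For `x ∈ T_d(k,β)` and a vertex `e_j`, `|e_j - x|² = |x|² - 2 x_j + 1`, and the quadratic equation
`k(d+1-k)β² - 2kβ - (d+2) = 0` satisfied by every admissible `β` makes this `2(β+1)` when
`x_j = c` and `2` when `x_j = c + β`. Two points of `T_d(k,β)` differ by `±β` in exactly
`2𝔩(x,y)` coordinates, so their squared distance is `2β²𝔩(x,y)`. Hence `R_d ∪ X` always realises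
the two distances `√2` and `√(2(β+1))`, and it is a 2-distance set iff every distance inside `X`
is one of them, i.e. iff `2β²𝔩(x,y) ∈ {2, 2(β+1)}`.
-/

lemma Set.ncard_eq_two_iff_subset_of_pair_subset {α : Type*} {s : Set α} {a b : α} (hab : a ≠ b)
    (h : {a, b} ⊆ s) : s.ncard = 2 ↔ s ⊆ {a, b} := by
  refine ⟨fun hs => (Set.eq_of_subset_of_ncard_le h ?_ ?_).ge, fun hs => ?_⟩
  · rw [hs, Set.ncard_pair hab]
  · exact Set.finite_of_ncard_ne_zero (by omega)
  · rw [hs.antisymm h, Set.ncard_pair hab]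

lemma distSet_subset_iff {m : ℕ} {X : Set (EuclideanSpace ℝ (Fin m))} {A : Set ℝ} :
    distSet X ⊆ A ↔ ∀ x ∈ X, ∀ y ∈ X, x ≠ y → dist x y ∈ A := by
  simp only [distSet, Set.ofPred_subset, forall_exists_index, and_imp]
  exact ⟨fun h x hx y hy hxy => h _ x hx y hy hxy rfl,
    fun h _ x hx y hy hxy hr => hr ▸ h x hx y hy hxy⟩

lemma sqrt_mem_distSet {m : ℕ} {X : Set (EuclideanSpace ℝ (Fin m))}
    {x y : EuclideanSpace ℝ (Fin m)} (hx : x ∈ X) (hy : y ∈ X) {a : ℝ} (ha : 0 < a) (h : dist x y ^ 2 = a) : √a ∈ distSet X := by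
  refine ⟨x, hx, y, hy, fun hxy => ?_, by rw [← h, Real.sqrt_sq dist_nonneg]⟩
  rw [hxy, dist_self] at h
  linarith

lemma mem_pair_sqrt_iff_sq_mem {r a b : ℝ} (hr : 0 ≤ r) (ha : 0 ≤ a) (hb : 0 ≤ b) :
    r ∈ ({√a, √b} : Set ℝ) ↔ r ^ 2 ∈ ({a, b} : Set ℝ) := by
  simp only [Set.mem_insert_iff, Set.mem_singleton_iff, eq_comm (a := r),
    Real.sqrt_eq_iff_eq_sq ha hr, Real.sqrt_eq_iff_eq_sq hb hr, eq_comm (b := r ^ 2)]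

lemma sum_comp_of_forall_eq_or_eq {ι : Type*} [Fintype ι] {x : ι → ℝ} {a b : ℝ}
    (hx : ∀ i, x i = a ∨ x i = b) (f : ℝ → ℝ) :
    ∑ i, f (x i) = {i | x i = a}.ncard * f a + (Fintype.card ι - {i | x i = a}.ncard) * f b := by
  have hterm : ∀ i, f (x i) = if x i = a then f a else f b := fun i => by
    split_ifs with h
    · rw [h]
    · rw [(hx i).resolve_left h]
  have hcard := Finset.card_filter_add_card_filter_not (s := Finset.univ) (fun i => x i = a)
  rw [Finset.card_univ] at hcard
  simp only [Finset.sum_congr rfl fun i _ => hterm i, Finset.sum_ite, Finset.sum_const,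
    nsmul_eq_mul, Set.ncard_eq_toFinset_card', Set.toFinset_ofPred, ← hcard]
  push_cast
  ring

lemma dist_single_one_sq {ι : Type*} [Fintype ι] [DecidableEq ι] (j : ι)
    (x : EuclideanSpace ℝ ι) :
    dist (EuclideanSpace.single j 1) x ^ 2 = ‖x‖ ^ 2 - 2 * x j + 1 := by
  rw [dist_eq_norm, norm_sub_sq_real, EuclideanSpace.inner_single_left, PiLp.norm_single]
  simp only [norm_one, map_one, one_mul]
  ring

lemma dist_single_one_single_one_sq {ι : Type*} [Fintype ι] [DecidableEq ι] {i j : ι}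
    (hij : i ≠ j) :
    dist (EuclideanSpace.single i (1 : ℝ)) (EuclideanSpace.single j 1) ^ 2 = 2 := by
  rw [dist_single_one_sq, PiLp.norm_single, PiLp.single_apply, if_neg hij]
  norm_num

lemma betaCond.quadratic {d k : ℕ} {β : ℝ} (hd : d ≠ 0) (hβ : betaCond d k β) :
    k * ((d : ℝ) + 1 - k) * β ^ 2 - 2 * k * β - ((d : ℝ) + 2) = 0 := by
  have hd0 : (d : ℝ) ≠ 0 := by exact_mod_cast hd
  rcases hβ with ⟨rfl, rfl⟩ | ⟨rfl, rfl⟩ | ⟨hk2, hkd, hβ⟩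
  · push_cast
    field_simp
    ring
  · push_cast
    field_simp
    ring
  · have hk : (2 : ℝ) ≤ k := by exact_mod_cast hk2
    have hkd' : (k : ℝ) ≤ d := by exact_mod_cast hkd
    have hk0 : (k : ℝ) ≠ 0 := by positivity
    have hm : (d : ℝ) + 1 - k ≠ 0 := by linarith
    have hs := Real.sq_sqrt (show 0 ≤ (k : ℝ) * ((d : ℝ) + 1) * ((d : ℝ) + 2 - k) by
      apply mul_nonneg (by positivity); linarith)
    rcases hβ with rfl | rfl
    all_goals
      field_simp
      linear_combination hs

/-- This needs more than the quadratic equation: for `k = 1` its other root `β = -1` gives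
`T_d(1,-1) = R_d`. -/
lemma betaCond.add_one_pos {d k : ℕ} {β : ℝ} (hd : d ≠ 0) (hβ : betaCond d k β) :
    0 < β + 1 := by
  have hd0 : (0 : ℝ) < d := by exact_mod_cast Nat.pos_of_ne_zero hd
  rcases hβ with ⟨-, rfl⟩ | ⟨-, rfl⟩ | ⟨hk2, hkd, hβ⟩
  · positivity
  · rw [div_add_one (by positivity)]
    apply div_pos _ (by positivity)
    linarith
  · have hk : (2 : ℝ) ≤ k := by exact_mod_cast hk2
    have hkd' : (k : ℝ) ≤ d := by exact_mod_cast hkd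
    have hden : (0 : ℝ) < k * ((d : ℝ) + 1 - k) := mul_pos (by linarith) (by linarith)
    have hlt : √((k : ℝ) * ((d : ℝ) + 1) * ((d : ℝ) + 2 - k)) < k * ((d : ℝ) + 2 - k) := by
      rw [Real.sqrt_lt' (by nlinarith)]
      nlinarith [mul_nonneg (sub_nonneg.2 hk) (sub_nonneg.2 hkd')]
    have hsqrt := Real.sqrt_nonneg ((k : ℝ) * ((d : ℝ) + 1) * ((d : ℝ) + 2 - k))
    rcases hβ with rfl | rfl <;> rw [div_add_one hden.ne'] <;> apply div_pos _ hden <;> nlinarith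

section Tset

variable {d k : ℕ} {β : ℝ} {x y : EuclideanSpace ℝ (Fin (d + 1))}

lemma norm_sq_of_mem_Tset (hx : x ∈ Tset d k β) :
    ‖x‖ ^ 2 = k * cval d k β ^ 2 + ((d : ℝ) + 1 - k) * (cval d k β + β) ^ 2 := by
  rw [EuclideanSpace.real_norm_sq_eq, sum_comp_of_forall_eq_or_eq hx.2.1 (· ^ 2), hx.2.2,
    Fintype.card_fin]
  push_cast
  ring

lemma dist_sq_of_mem_Tset (hx : x ∈ Tset d k β) (hy : y ∈ Tset d k β) :
    dist x y ^ 2 = 2 * β ^ 2 * lfun x y := by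
  have hterm : ∀ i, (x i - y i) ^ 2 = β ^ 2 * if x i ≠ y i then 1 else 0 := fun i => by
    split_ifs with h
    · rcases hx.2.1 i with hxi | hxi <;> rcases hy.2.1 i with hyi | hyi <;>
        first | exact absurd (hxi.trans hyi.symm) h | (rw [hxi, hyi]; ring)
    · rw [not_not.1 h, sub_self]
      ring
  rw [EuclideanSpace.dist_eq, Real.sq_sqrt (by positivity)]
  simp only [Real.dist_eq, sq_abs, hterm, ← Finset.mul_sum, Finset.sum_boole, lfun,
    Set.ncard_eq_toFinset_card', Set.toFinset_ofPred]
  ring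

variable (hq : k * ((d : ℝ) + 1 - k) * β ^ 2 - 2 * k * β - ((d : ℝ) + 2) = 0)
include hq

lemma dist_single_sq_of_mem_Tset_of_eq_cval (hx : x ∈ Tset d k β) {j : Fin (d + 1)}
    (hj : x j = cval d k β) :
    dist (EuclideanSpace.single j 1) x ^ 2 = 2 * (β + 1) := by
  rw [dist_single_one_sq, norm_sq_of_mem_Tset hx, hj, cval]
  field_simp
  linear_combination ((d : ℝ) + 1) * hq

lemma dist_single_sq_of_mem_Tset_of_eq_cval_add (hx : x ∈ Tset d k β) {j : Fin (d + 1)}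
    (hj : x j = cval d k β + β) :
    dist (EuclideanSpace.single j 1) x ^ 2 = 2 := by
  rw [dist_single_one_sq, norm_sq_of_mem_Tset hx, hj, cval]
  field_simp
  linear_combination ((d : ℝ) + 1) * hq

lemma dist_mem_of_mem_simplex (hβ : 0 ≤ β + 1) {u v : EuclideanSpace ℝ (Fin (d + 1))}
    (hu : u ∈ simplex d) (hv : v ∈ simplex d ∪ Tset d k β) (huv : u ≠ v) :
    dist u v ∈ ({√2, √(2 * (β + 1))} : Set ℝ) := by
  obtain ⟨i, rfl⟩ := hu
  rw [mem_pair_sqrt_iff_sq_mem dist_nonneg zero_le_two (by positivity)]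
  rcases hv with ⟨j, rfl⟩ | hv
  · exact .inl (dist_single_one_single_one_sq fun h => huv (h ▸ rfl))
  · rcases hv.2.1 i with hi | hi
    · exact .inr (dist_single_sq_of_mem_Tset_of_eq_cval hq hv hi)
    · exact .inl (dist_single_sq_of_mem_Tset_of_eq_cval_add hq hv hi)

lemma sqrt_pair_subset_distSet_simplex_union (hd : 1 ≤ d) (hk : 1 ≤ k) (hβ : 0 < β + 1)
    {X : Set (EuclideanSpace ℝ (Fin (d + 1)))} (hX : X ⊆ Tset d k β) (hne : X.Nonempty) :
    {√2, √(2 * (β + 1))} ⊆ distSet (simplex d ∪ X) := by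
  obtain ⟨x, hx⟩ := hne
  have hcard : {i | x i = cval d k β}.ncard ≠ 0 := by
    rw [(hX hx).2.2]
    omega
  obtain ⟨j, hj⟩ := Set.nonempty_of_ncard_ne_zero hcard
  have : Nontrivial (Fin (d + 1)) := Fin.nontrivial_iff_two_le.2 (by omega)
  obtain ⟨i, hij⟩ := exists_ne j
  rintro r (rfl | rfl)
  · exact sqrt_mem_distSet (.inl ⟨i, rfl⟩) (.inl ⟨j, rfl⟩) two_pos
      (dist_single_one_single_one_sq hij)
  · exact sqrt_mem_distSet (.inl ⟨j, rfl⟩) (.inr hx) (by positivity)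
      (dist_single_sq_of_mem_Tset_of_eq_cval hq (hX hx) hj)

end Tset

lemma dist_mem_iff_lfun_mem_of_mem_Tset {d k : ℕ} {β : ℝ} {x y : EuclideanSpace ℝ (Fin (d + 1))}
    (hβ : β ≠ 0) (hβ1 : 0 ≤ β + 1) (hx : x ∈ Tset d k β) (hy : y ∈ Tset d k β) :
    dist x y ∈ ({√2, √(2 * (β + 1))} : Set ℝ) ↔
      lfun x y ∈ ({1 / β ^ 2, (β + 1) / β ^ 2} : Set ℝ) := by
  rw [mem_pair_sqrt_iff_sq_mem dist_nonneg zero_le_two (by positivity),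
    dist_sq_of_mem_Tset hx hy]
  simp only [Set.mem_insert_iff, Set.mem_singleton_iff]
  field_simp

theorem stmt1_general (d k : ℕ) (hd : 2 ≤ d) (hk1 : 1 ≤ k) (β : ℝ)
    (hβ : betaCond d k β) (X : Set (EuclideanSpace ℝ (Fin (d+1)))) (hX : X ⊆ Tset d k β)
    (hne : X.Nonempty) :
    IsTwoDistSet (simplex d ∪ X) ↔
      ∀ x ∈ X, ∀ y ∈ X, x ≠ y → lfun x y ∈ ({1/β^2, (β+1)/β^2} : Set ℝ) := by
  have hq := hβ.quadratic (by omega)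
  have hβ1 := hβ.add_one_pos (by omega)
  have hβ0 : β ≠ 0 := by
    rintro rfl
    linarith
  have hpair := sqrt_pair_subset_distSet_simplex_union hq (by omega) hk1 hβ1 hX hne
  have hsqrt_ne : √2 ≠ √(2 * (β + 1)) := by
    rw [Ne, Real.sqrt_inj zero_le_two (by positivity)]
    intro h
    exact hβ0 (by linarith)
  rw [IsTwoDistSet, Set.ncard_eq_two_iff_subset_of_pair_subset hsqrt_ne hpair, distSet_subset_iff]
  have hXT : simplex d ∪ X ⊆ simplex d ∪ Tset d k β := Set.union_subset_union_right _ hX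
  constructor
  · intro h x hx y hy hxy
    exact (dist_mem_iff_lfun_mem_of_mem_Tset hβ0 hβ1.le (hX hx) (hX hy)).1
      (h x (.inr hx) y (.inr hy) hxy)
  · rintro h u (hu | hu) v hv huv
    · exact dist_mem_of_mem_simplex hq hβ1.le hu (hXT hv) huv
    rcases hv with hv | hv
    · rw [dist_comm]
      exact dist_mem_of_mem_simplex hq hβ1.le hv (hXT (.inr hu)) huv.symm
    · exact (dist_mem_iff_lfun_mem_of_mem_Tset hβ0 hβ1.le (hX hu) (hX hv)).2 (h u hu v hv huv)

theorem stmt1 (d k : ℕ) (hd : 2 ≤ d) (hk1 : 1 ≤ k) (hk2 : k ≤ d + 1) (β : ℝ)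
    (hβ : betaCond d k β) (X : Set (EuclideanSpace ℝ (Fin (d+1)))) (hX : X ⊆ Tset d k β)
    (hne : X.Nonempty) :
    IsTwoDistSet (simplex d ∪ X) ↔
      ∀ x ∈ X, ∀ y ∈ X, x ≠ y → lfun x y ∈ ({1/β^2, (β+1)/β^2} : Set ℝ) :=
  stmt1_general d k hd hk1 β hβ X hX hne
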